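/- arXiv:2510.21472 — 3 statements merged into one kernel-verified Lean document; each statement's English description precedes it below -/
import Mathlib

section
/- Let X and Y be random variables on finite sample spaces Ω_X and Ω_Y with distributions μ_X and μ_Y, let B ⊆ Ω_X × Ω_Y, and let ε ∈ [0,1]. Then there exists a coupling (X,Y) with the given marginals such that P((X,Y) ∈ B) ≤ ε if and only if for every A ⊆ Ω_X, μ_X(A) ≤ μ_Y(N(A)) + ε, where N(A) = {y ∈ Ω_Y : there exists x ∈ A with (x,y) ∉ B}. -/
open Finset
open scoped Classical
namespace StrassenAux
variable {ΩX ΩY : Type*} [Fintype ΩX] [Fintype ΩY]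

noncomputable def ind (a : ΩX × ΩY) : ΩX × ΩY → ℝ := fun q => if q = a then 1 else 0

lemma ind_row (x : ΩX) (y : ΩY) (z : ΩX) :
    ∑ y', ind (x, y) (z, y') = if z = x then (1:ℝ) else 0 := by
  rcases eq_or_ne z x with rfl | h
  · simp [ind, Prod.ext_iff]
  · simp [ind, Prod.ext_iff, h]

lemma ind_col (x : ΩX) (y : ΩY) (w : ΩY) :
    ∑ x', ind (x, y) (x', w) = if w = y then (1:ℝ) else 0 := by
  rcases eq_or_ne w y with rfl | h
  · simp [ind, Prod.ext_iff]
  · simp [ind, Prod.ext_iff, h]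

inductive Reach (μX : ΩX → ℝ) (B : Finset (ΩX × ΩY)) (π : ΩX × ΩY → ℝ) : ΩX → Prop
  | seed (x : ΩX) : (∑ y, π (x, y)) < μX x → Reach μX B π x
  | step (x x' : ΩX) (y : ΩY) : Reach μX B π x → (x, y) ∉ B → 0 < π (x', y) →
      Reach μX B π x'

lemma flow_exists {μX : ΩX → ℝ} {B : Finset (ΩX × ΩY)} {π : ΩX × ΩY → ℝ} {x : ΩX}
    (h : Reach μX B π x) :
    ∃ (x0 : ΩX) (c : ΩX × ΩY → ℝ),
      (∑ y, π (x0, y)) < μX x0 ∧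
      (∀ z, ∑ y, c (z, y) = (if z = x0 then (1:ℝ) else 0) - (if z = x then 1 else 0)) ∧
      (∀ w, ∑ x', c (x', w) = 0) ∧
      (∀ q, 0 < c q → q ∉ B) ∧
      (∀ q, c q < 0 → 0 < π q) := by
  induction h with
  | seed x hx =>
      exact ⟨x, 0, hx, by simp, by simp, by simp, by simp⟩
  | step x x' y hr hxy hx' ih =>
      obtain ⟨x0, c, hx0, hrow, hcol, hpos, hneg⟩ := ih
      refine ⟨x0, c + ind (x, y) - ind (x', y), hx0, ?_, ?_, ?_, ?_⟩
      · intro z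
        simp only [Pi.sub_apply, Pi.add_apply, Finset.sum_sub_distrib, Finset.sum_add_distrib,
          hrow z, ind_row]
        by_cases h1 : z = x <;> by_cases h2 : z = x' <;> simp [h1, h2]
      · intro w
        simp only [Pi.sub_apply, Pi.add_apply, Finset.sum_sub_distrib, Finset.sum_add_distrib,
          hcol w, ind_col]
        ring
      · intro q hq
        simp only [Pi.sub_apply, Pi.add_apply, ind] at hq
        rcases eq_or_ne q (x, y) with rfl | h1
        · exact hxy
        · rcases eq_or_ne q (x', y) with rfl | h2
          · apply hpos
            simp [h1] at hq
            linarith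
          · apply hpos
            simpa [h1, h2] using hq
      · intro q hq
        simp only [Pi.sub_apply, Pi.add_apply, ind] at hq
        rcases eq_or_ne q (x', y) with rfl | h2
        · exact hx'
        · apply hneg
          rcases eq_or_ne q (x, y) with rfl | h1
          · simp [h2] at hq; linarith
          · simpa [h1, h2] using hq

/-- At a maximal good subcoupling, every column good-reachable from a deficient row
is saturated. -/
lemma reach_saturated {μX : ΩX → ℝ} {μY : ΩY → ℝ} {B : Finset (ΩX × ΩY)}
    {π0 : ΩX × ΩY → ℝ}
    (h0 : ∀ q, 0 ≤ π0 q)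
    (hrowle : ∀ z, ∑ y, π0 (z, y) ≤ μX z)
    (hcolle : ∀ w, ∑ x, π0 (x, w) ≤ μY w)
    (hsupp : ∀ q ∈ B, π0 q = 0)
    (hmax : ∀ π' : ΩX × ΩY → ℝ, (∀ q, 0 ≤ π' q) → (∀ z, ∑ y, π' (z, y) ≤ μX z) →
      (∀ w, ∑ x, π' (x, w) ≤ μY w) → (∀ q ∈ B, π' q = 0) →
      ∑ q, π' q ≤ ∑ q, π0 q)
    {x : ΩX} {y : ΩY} (hr : Reach μX B π0 x) (hxy : (x, y) ∉ B) :
    ∑ x', π0 (x', y) = μY y := by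
  by_contra hne
  have hcolslack : ∑ x', π0 (x', y) < μY y := lt_of_le_of_ne (hcolle y) hne
  obtain ⟨x0, c, hx0, hcrow, hccol, hcpos, hcneg⟩ := flow_exists hr
  set d : ΩX × ΩY → ℝ := c + ind (x, y) with hd
  -- properties of d
  have hdrow : ∀ z, ∑ y', d (z, y') = if z = x0 then (1:ℝ) else 0 := by
    intro z
    simp only [hd, Pi.add_apply, Finset.sum_add_distrib, hcrow z, ind_row]
    by_cases h1 : z = x0 <;> by_cases h2 : z = x <;> simp [h1, h2]
  have hdcol : ∀ w, ∑ x', d (x', w) = if w = y then (1:ℝ) else 0 := by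
    intro w
    simp only [hd, Pi.add_apply, Finset.sum_add_distrib, hccol w, ind_col]
    ring
  have hdpos : ∀ q, 0 < d q → q ∉ B := by
    intro q hq
    rcases eq_or_ne q (x, y) with rfl | h1
    · exact hxy
    · apply hcpos
      simpa [hd, ind, h1] using hq
  have hdneg : ∀ q, d q < 0 → 0 < π0 q := by
    intro q hq
    apply hcneg
    have : ind (x, y) q ≥ 0 := by unfold ind; positivity
    simp only [hd, Pi.add_apply] at hq
    linarith
  -- choose δ
  set negs : Finset (ΩX × ΩY) := univ.filter (fun q => d q < 0) with hnegs
  set s : Finset ℝ := insert (μX x0 - ∑ y', π0 (x0, y'))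
      (insert (μY y - ∑ x', π0 (x', y)) (negs.image fun q => π0 q / (-(d q)))) with hs
  have hsne : s.Nonempty := ⟨_, Finset.mem_insert_self _ _⟩
  set δ : ℝ := s.min' hsne with hδ
  have hδpos : 0 < δ := by
    rw [hδ, Finset.lt_min'_iff]
    intro r hr'
    simp only [hs, Finset.mem_insert, Finset.mem_image, hnegs, Finset.mem_filter] at hr'
    rcases hr' with rfl | rfl | ⟨q, ⟨_, hq⟩, rfl⟩
    · linarith
    · linarith
    · exact div_pos (hdneg q hq) (by linarith)
  have hδ1 : δ ≤ μX x0 - ∑ y', π0 (x0, y') := Finset.min'_le _ _ (Finset.mem_insert_self _ _)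
  have hδ2 : δ ≤ μY y - ∑ x', π0 (x', y) :=
    Finset.min'_le _ _ (by simp [hs])
  have hδ3 : ∀ q, d q < 0 → δ * (-(d q)) ≤ π0 q := by
    intro q hq
    have hmem : π0 q / (-(d q)) ∈ s := by
      simp only [hs, Finset.mem_insert, Finset.mem_image, hnegs, Finset.mem_filter]
      exact Or.inr (Or.inr ⟨q, ⟨Finset.mem_univ q, hq⟩, rfl⟩)
    have := Finset.min'_le _ _ hmem
    rw [le_div_iff₀ (by linarith : (0:ℝ) < -(d q))] at this
    linarith
  -- the improved subcoupling
  set π' : ΩX × ΩY → ℝ := fun q => π0 q + δ * d q with hπ'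
  have h1 : ∀ q, 0 ≤ π' q := by
    intro q
    rcases lt_or_ge (d q) 0 with h | h
    · have h5 := hδ3 q h
      simp only [hπ']
      linarith
    · have h5 := mul_nonneg hδpos.le h
      have h6 := h0 q
      simp only [hπ']
      linarith
  have h2 : ∀ z, ∑ y', π' (z, y') ≤ μX z := by
    intro z
    simp only [hπ', Finset.sum_add_distrib, ← Finset.mul_sum, hdrow z]
    by_cases hz : z = x0
    · subst hz; rw [if_pos rfl]; linarith
    · simp only [if_neg hz]
      simpa using hrowle z
  have h3 : ∀ w, ∑ x', π' (x', w) ≤ μY w := by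
    intro w
    simp only [hπ', Finset.sum_add_distrib, ← Finset.mul_sum, hdcol w]
    by_cases hw : w = y
    · subst hw; rw [if_pos rfl]; linarith
    · simp only [if_neg hw]
      simpa using hcolle w
  have h4 : ∀ q ∈ B, π' q = 0 := by
    intro q hq
    have hd0 : d q = 0 := by
      rcases lt_trichotomy (d q) 0 with h | h | h
      · exact absurd (hsupp q hq) (ne_of_gt (hdneg q h))
      · exact h
      · exact absurd hq (hdpos q h)
    simp [hπ', hd0, hsupp q hq]
  have hmass : ∑ q, π' q = (∑ q, π0 q) + δ := by
    have : ∑ q, d q = 1 := by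
      rw [Fintype.sum_prod_type]
      simp only [hdrow]
      simp
    simp only [hπ', Finset.sum_add_distrib, ← Finset.mul_sum, this, mul_one]
  have := hmax π' h1 h2 h3 h4
  rw [hmass] at this
  linarith

end StrassenAux

open Classical in
/-- Strassen's theorem with deficiency on finite spaces: a coupling of `μX` and `μY`
putting mass at most `ε` on the bad set `B` exists iff the deficiency-Hall condition
`μX(A) ≤ μY(N(A)) + ε` holds for every `A ⊆ ΩX`, where
`N(A) = {y : ∃ x ∈ A, (x,y) ∉ B}`. -/
theorem strassen_with_deficiency {ΩX ΩY : Type*} [Fintype ΩX] [Fintype ΩY]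
    (μX : ΩX → ℝ) (μY : ΩY → ℝ)
    (hμX0 : ∀ x, 0 ≤ μX x) (hμX1 : ∑ x, μX x = 1)
    (hμY0 : ∀ y, 0 ≤ μY y) (hμY1 : ∑ y, μY y = 1)
    (B : Finset (ΩX × ΩY)) (ε : ℝ) (hε0 : 0 ≤ ε) (hε1 : ε ≤ 1) :
    (∃ π : ΩX × ΩY → ℝ,
        (∀ q, 0 ≤ π q) ∧ (∑ q, π q = 1) ∧
        (∀ x, ∑ y, π (x, y) = μX x) ∧
        (∀ y, ∑ x, π (x, y) = μY y) ∧
        ∑ q ∈ B, π q ≤ ε) ↔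
      ∀ A : Finset ΩX,
        ∑ x ∈ A, μX x ≤
          (∑ y ∈ Finset.univ.filter (fun y => ∃ x ∈ A, (x, y) ∉ B), μY y) + ε := by
  constructor
  · -- easy direction
    rintro ⟨π, hpos, hsum, hrow, hcol, hB⟩ A
    set N : Finset ΩY := Finset.univ.filter (fun y => ∃ x ∈ A, (x, y) ∉ B) with hN
    have split : ∀ x : ΩX, ∑ y, π (x, y) =
        ∑ y ∈ N, π (x, y) + ∑ y ∈ univ \ N, π (x, y) := by
      intro x
      rw [add_comm, Finset.sum_sdiff (Finset.subset_univ N)]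
    have e1 : ∑ x ∈ A, μX x =
        ∑ x ∈ A, ∑ y ∈ N, π (x, y) + ∑ x ∈ A, ∑ y ∈ univ \ N, π (x, y) := by
      rw [← Finset.sum_add_distrib]
      refine Finset.sum_congr rfl fun x _ => ?_
      rw [← split x, hrow x]
    have b1 : ∑ x ∈ A, ∑ y ∈ N, π (x, y) ≤ ∑ y ∈ N, μY y := by
      rw [Finset.sum_comm]
      refine Finset.sum_le_sum fun y _ => ?_
      rw [← hcol y]
      exact Finset.sum_le_sum_of_subset_of_nonneg (Finset.subset_univ A)
        (fun x _ _ => hpos _)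
    have b2 : ∑ x ∈ A, ∑ y ∈ univ \ N, π (x, y) ≤ ε := by
      refine le_trans ?_ hB
      rw [← Finset.sum_product']
      refine Finset.sum_le_sum_of_subset_of_nonneg ?_ (fun q _ _ => hpos q)
      intro q hq
      rw [Finset.mem_product] at hq
      obtain ⟨hq1, hq2⟩ := hq
      rw [Finset.mem_sdiff] at hq2
      by_contra hqB
      exact hq2.2 (by
        rw [hN, Finset.mem_filter]
        exact ⟨Finset.mem_univ _, ⟨q.1, hq1, by simpa using hqB⟩⟩)
    linarith
  · -- hard direction
    intro hHall
    -- the set of good subcouplings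
    set K : Set ((ΩX × ΩY) → ℝ) := {π | (∀ q, 0 ≤ π q) ∧ (∀ z, ∑ y, π (z, y) ≤ μX z) ∧
      (∀ w, ∑ x, π (x, w) ≤ μY w) ∧ ∀ q ∈ B, π q = 0} with hK
    have hKclosed : IsClosed K := by
      have : K = (⋂ q, {π : (ΩX × ΩY) → ℝ | 0 ≤ π q}) ∩
          ((⋂ z, {π : (ΩX × ΩY) → ℝ | ∑ y, π (z, y) ≤ μX z}) ∩
          ((⋂ w, {π : (ΩX × ΩY) → ℝ | ∑ x, π (x, w) ≤ μY w}) ∩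
          (⋂ q ∈ B, {π : (ΩX × ΩY) → ℝ | π q = 0}))) := by
        ext π
        simp only [hK, Set.mem_setOf_eq, Set.mem_inter_iff, Set.mem_iInter]
      rw [this]
      refine IsClosed.inter (isClosed_iInter fun q =>
          isClosed_le continuous_const (continuous_apply q)) ?_
      refine IsClosed.inter (isClosed_iInter fun z =>
          isClosed_le (continuous_finset_sum _ fun y _ => continuous_apply (z, y))
            continuous_const) ?_
      refine IsClosed.inter (isClosed_iInter fun w =>
          isClosed_le (continuous_finset_sum _ fun x _ => continuous_apply (x, w))
            continuous_const) ?_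
      exact isClosed_iInter fun q => isClosed_iInter fun _ =>
        isClosed_eq (continuous_apply q) continuous_const
    have hμX_le1 : ∀ x, μX x ≤ 1 := by
      intro x
      rw [← hμX1]
      exact Finset.single_le_sum (fun i _ => hμX0 i) (Finset.mem_univ x)
    have hKbdd : Bornology.IsBounded K := by
      rw [isBounded_iff_forall_norm_le]
      refine ⟨1, fun π hπ => ?_⟩
      obtain ⟨h0, hrowle, _, _⟩ := hπ
      rw [pi_norm_le_iff_of_nonneg zero_le_one]
      rintro ⟨a, b⟩
      rw [Real.norm_eq_abs, abs_le]
      constructor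
      · linarith [h0 (a, b)]
      · calc π (a, b) ≤ ∑ y, π (a, y) :=
              Finset.single_le_sum (fun y _ => h0 (a, y)) (Finset.mem_univ b)
          _ ≤ μX a := hrowle a
          _ ≤ 1 := hμX_le1 a
    have h0K : (0 : (ΩX × ΩY) → ℝ) ∈ K := by
      refine ⟨fun q => le_refl 0, fun z => ?_, fun w => ?_, fun q _ => rfl⟩
      · simpa using hμX0 z
      · simpa using hμY0 w
    obtain ⟨π0, hπ0K, hπ0max⟩ :=
      (Metric.isCompact_of_isClosed_isBounded hKclosed hKbdd).exists_isMaxOn ⟨0, h0K⟩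
        ((continuous_finset_sum _ fun q _ => continuous_apply q).continuousOn)
    obtain ⟨h0, hrowle, hcolle, hsupp⟩ := hπ0K
    have hmax : ∀ π' : ΩX × ΩY → ℝ, (∀ q, 0 ≤ π' q) → (∀ z, ∑ y, π' (z, y) ≤ μX z) →
        (∀ w, ∑ x, π' (x, w) ≤ μY w) → (∀ q ∈ B, π' q = 0) →
        ∑ q, π' q ≤ ∑ q, π0 q :=
      fun π' a b c d => hπ0max (show π' ∈ K from ⟨a, b, c, d⟩)
    -- the reachable sets
    set S : Finset ΩX := Finset.univ.filter (StrassenAux.Reach μX B π0) with hS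
    set T : Finset ΩY := Finset.univ.filter (fun y => ∃ x ∈ S, (x, y) ∉ B) with hT
    have hsat : ∀ y ∈ T, ∑ x', π0 (x', y) = μY y := by
      intro y hy
      rw [hT, Finset.mem_filter] at hy
      obtain ⟨-, x, hx, hxy⟩ := hy
      rw [hS, Finset.mem_filter] at hx
      exact StrassenAux.reach_saturated h0 hrowle hcolle hsupp hmax hx.2 hxy
    have hcol0 : ∀ y ∈ T, ∀ x, x ∉ S → π0 (x, y) = 0 := by
      intro y hy x hx
      by_contra hne
      have hpos : 0 < π0 (x, y) := lt_of_le_of_ne (h0 _) (Ne.symm hne)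
      rw [hT, Finset.mem_filter] at hy
      obtain ⟨-, x', hx', hx'y⟩ := hy
      rw [hS, Finset.mem_filter] at hx'
      exact hx (by
        rw [hS, Finset.mem_filter]
        exact ⟨Finset.mem_univ x, StrassenAux.Reach.step x' x y hx'.2 hx'y hpos⟩)
    have hrow0 : ∀ x ∈ S, ∀ y, y ∉ T → π0 (x, y) = 0 := by
      intro x hx y hy
      by_cases hB' : (x, y) ∈ B
      · exact hsupp _ hB'
      · exact absurd (by
          rw [hT, Finset.mem_filter]
          exact ⟨Finset.mem_univ y, ⟨x, hx, hB'⟩⟩) hy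
    have hnodef : ∀ x, x ∉ S → ∑ y, π0 (x, y) = μX x := by
      intro x hx
      refine le_antisymm (hrowle x) ?_
      by_contra h
      push_neg at h
      exact hx (by
        rw [hS, Finset.mem_filter]
        exact ⟨Finset.mem_univ x, StrassenAux.Reach.seed x h⟩)
    set ν : ℝ := ∑ q, π0 q with hν
    have hν_rows : ν = ∑ x, ∑ y, π0 (x, y) := Fintype.sum_prod_type _
    have hresid : ∑ x, (μX x - ∑ y, π0 (x, y)) = 1 - ν := by
      rw [Finset.sum_sub_distrib, hμX1, ← hν_rows]
    have hchain : ∑ y ∈ T, μY y = ∑ x ∈ S, μX x - (1 - ν) := by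
      have e1 : ∑ y ∈ T, μY y = ∑ y ∈ T, ∑ x ∈ S, π0 (x, y) := by
        refine Finset.sum_congr rfl fun y hy => ?_
        rw [← hsat y hy]
        exact (Finset.sum_subset (Finset.subset_univ S)
          (fun x _ hx => hcol0 y hy x hx)).symm
      have e3 : ∑ y ∈ T, ∑ x ∈ S, π0 (x, y) = ∑ x ∈ S, ∑ y ∈ T, π0 (x, y) :=
        Finset.sum_comm
      have e4 : ∑ x ∈ S, ∑ y ∈ T, π0 (x, y) = ∑ x ∈ S, ∑ y, π0 (x, y) := by
        refine Finset.sum_congr rfl fun x hx => ?_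
        exact Finset.sum_subset (Finset.subset_univ T) (fun y _ hy => hrow0 x hx y hy)
      have e5 : ∑ x, (μX x - ∑ y, π0 (x, y)) = ∑ x ∈ S, (μX x - ∑ y, π0 (x, y)) :=
        (Finset.sum_subset (Finset.subset_univ S)
          (fun x _ hx => by rw [hnodef x hx]; ring)).symm
      have e6 : ∑ x ∈ S, ∑ y, π0 (x, y) = ∑ x ∈ S, μX x - (1 - ν) := by
        rw [← hresid, e5, Finset.sum_sub_distrib]
        ring
      rw [e1, e3, e4, e6]
    have hHallS := hHall S
    rw [← hT] at hHallS
    have hmle : 1 - ν ≤ ε := by linarith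
    -- residual marginals
    set rX : ΩX → ℝ := fun x => μX x - ∑ y, π0 (x, y) with hrX
    set rY : ΩY → ℝ := fun y => μY y - ∑ x, π0 (x, y) with hrY
    have hrX0 : ∀ x, 0 ≤ rX x := fun x => by simp only [hrX]; linarith [hrowle x]
    have hrY0 : ∀ y, 0 ≤ rY y := fun y => by simp only [hrY]; linarith [hcolle y]
    have hrXsum : ∑ x, rX x = 1 - ν := hresid
    have hν_cols : ν = ∑ y, ∑ x, π0 (x, y) := by
      rw [hν, Fintype.sum_prod_type]
      exact Finset.sum_comm
    have hrYsum : ∑ y, rY y = 1 - ν := by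
      simp only [hrY]
      rw [Finset.sum_sub_distrib, hμY1, ← hν_cols]
    have hm0 : 0 ≤ 1 - ν := by
      rw [← hrXsum]
      exact Finset.sum_nonneg fun x _ => hrX0 x
    rcases hm0.eq_or_lt with hm | hm
    · -- no residual mass: π0 is already a coupling
      have hrX_zero : ∀ x, rX x = 0 := by
        intro x
        have := (Finset.sum_eq_zero_iff_of_nonneg fun x _ => hrX0 x).1 (by rw [hrXsum, ← hm])
        exact this x (Finset.mem_univ x)
      have hrY_zero : ∀ y, rY y = 0 := by
        intro y
        have := (Finset.sum_eq_zero_iff_of_nonneg fun y _ => hrY0 y).1 (by rw [hrYsum, ← hm])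
        exact this y (Finset.mem_univ y)
      refine ⟨π0, h0, by rw [← hν]; linarith, fun x => ?_, fun y => ?_, ?_⟩
      · have := hrX_zero x; simp only [hrX] at this; linarith
      · have := hrY_zero y; simp only [hrY] at this; linarith
      · rw [Finset.sum_eq_zero hsupp]; exact hε0
    · -- add a product coupling of the residuals
      set m : ℝ := 1 - ν with hmdef
      refine ⟨fun q => π0 q + rX q.1 * rY q.2 / m, fun q => ?_, ?_, ?_, ?_, ?_⟩
      · have : 0 ≤ rX q.1 * rY q.2 / m :=
          div_nonneg (mul_nonneg (hrX0 _) (hrY0 _)) hm.le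
        linarith [h0 q]
      · rw [Fintype.sum_prod_type]
        have : ∀ x : ΩX, ∑ y, (π0 (x, y) + rX x * rY y / m) = μX x := by
          intro x
          rw [Finset.sum_add_distrib]
          have : ∑ y, rX x * rY y / m = rX x := by
            have : ∀ y : ΩY, rX x * rY y / m = rX x / m * rY y := fun y => by ring
            rw [Finset.sum_congr rfl fun y _ => this y, ← Finset.mul_sum, hrYsum,
              div_mul_cancel₀ _ (ne_of_gt hm)]
          rw [this]
          simp only [hrX]
          ring
        rw [Finset.sum_congr rfl fun x _ => this x, hμX1]
      · intro x
        rw [Finset.sum_add_distrib]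
        have : ∑ y, rX x * rY y / m = rX x := by
          have h' : ∀ y : ΩY, rX x * rY y / m = rX x / m * rY y := fun y => by ring
          rw [Finset.sum_congr rfl fun y _ => h' y, ← Finset.mul_sum, hrYsum,
            div_mul_cancel₀ _ (ne_of_gt hm)]
        rw [this]
        simp only [hrX]
        ring
      · intro y
        rw [Finset.sum_add_distrib]
        have : ∑ x, rX x * rY y / m = rY y := by
          have h' : ∀ x : ΩX, rX x * rY y / m = rY y / m * rX x := fun x => by ring
          rw [Finset.sum_congr rfl fun x _ => h' x, ← Finset.mul_sum, hrXsum,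
            div_mul_cancel₀ _ (ne_of_gt hm)]
        rw [this]
        simp only [hrY]
        ring
      · have e1 : ∑ q ∈ B, (π0 q + rX q.1 * rY q.2 / m) = ∑ q ∈ B, rX q.1 * rY q.2 / m := by
          refine Finset.sum_congr rfl fun q hq => ?_
          rw [hsupp q hq]
          ring
        have e2 : ∑ q ∈ B, rX q.1 * rY q.2 / m ≤ ∑ q : ΩX × ΩY, rX q.1 * rY q.2 / m :=
          Finset.sum_le_sum_of_subset_of_nonneg (Finset.subset_univ B)
            (fun q _ _ => div_nonneg (mul_nonneg (hrX0 _) (hrY0 _)) hm.le)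
        have e3 : ∑ q : ΩX × ΩY, rX q.1 * rY q.2 / m = m := by
          rw [Fintype.sum_prod_type]
          have : ∀ x : ΩX, ∑ y, rX x * rY y / m = rX x := by
            intro x
            have h' : ∀ y : ΩY, rX x * rY y / m = rX x / m * rY y := fun y => by ring
            rw [Finset.sum_congr rfl fun y _ => h' y, ← Finset.mul_sum, hrYsum,
              div_mul_cancel₀ _ (ne_of_gt hm)]
          rw [Finset.sum_congr rfl fun x _ => this x, hrXsum]
        rw [e1]
        calc ∑ q ∈ B, rX q.1 * rY q.2 / m ≤ ∑ q : ΩX × ΩY, rX q.1 * rY q.2 / m := e2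
          _ = m := e3
          _ ≤ ε := hmle
end

section
/- Let μ_X, μ_Y be probability measures on finite sets Ω_X, Ω_Y, let B ⊆ Ω_X × Ω_Y, and suppose P is a probability measure on Ω_X × Ω_Y with P(B) ≤ α, total variation distance d_TV(μ_X, P_X) ≤ β, and d_TV(μ_Y, P_Y) ≤ γ, where P_X, P_Y denote the marginals of P. Then there exists a probability measure π on Ω_X × Ω_Y with marginals exactly μ_X and μ_Y such that π(B) ≤ α + β + γ. -/
open Finset

/-!
Shrink `P` twice: scale each row `x` by `min 1 (μX x / P_X x)`, then each column `y` by the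
analogous factor. The result `Q ≤ P` has marginals below `μX` and `μY`, and its missing mass is
the `X`-deficit `∑ (μX - P_X)⁺ ≤ β` plus what the column step removed, which is at most the
`Y`-excess `∑ (P_Y - μY)⁺ ≤ γ`. Adding to `Q` the product of its two marginal deficits,
normalised by the missing mass, gives an exact coupling that puts on `B` at most
`Q(B) ≤ P(B) ≤ α` plus the missing mass.
-/

section

variable {α β : Type*}

lemma sum_posPart_le_of_forall_sum_le {ι : Type*} [Fintype ι] {f : ι → ℝ} {c : ℝ}
    (h : ∀ A : Finset ι, ∑ x ∈ A, f x ≤ c) : ∑ x, (f x)⁺ ≤ c := by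
  classical
  calc ∑ x, (f x)⁺ = ∑ x with 0 ≤ f x, f x := by simp only [posPart_eq_ite, sum_filter]
    _ ≤ c := h _

lemma sub_min_eq_posPart_sub (a b : ℝ) : a - min a b = (a - b)⁺ := by
  rw [← sub_sub_cancel a (a - b)⁺, ← inf_eq_sub_posPart_sub]

lemma min_one_div_mul_self {m s : ℝ} (hm : 0 ≤ m) (hs : 0 ≤ s) :
    min 1 (m / s) * s = min s m := by
  rcases hs.eq_or_lt with rfl | hs
  · simp [hm]
  rcases le_total s m with hsm | hms
  · rw [min_eq_left ((one_le_div hs).mpr hsm), one_mul, min_eq_left hsm]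
  · rw [min_eq_right ((div_le_one hs).mpr hms), div_mul_cancel₀ _ hs.ne', min_eq_right hms]

lemma exists_le_rowSums_eq_min [Fintype β] {P : α × β → ℝ} (hP : ∀ q, 0 ≤ P q) {μ : α → ℝ}
    (hμ : ∀ x, 0 ≤ μ x) :
    ∃ Q : α × β → ℝ, (∀ q, 0 ≤ Q q) ∧ (∀ q, Q q ≤ P q) ∧
      ∀ x, ∑ y, Q (x, y) = min (∑ y, P (x, y)) (μ x) := by
  have hc : ∀ x, 0 ≤ min 1 (μ x / ∑ y, P (x, y)) := fun x =>
    le_min zero_le_one (div_nonneg (hμ x) (sum_nonneg fun y _ => hP _))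
  refine ⟨fun q => min 1 (μ q.1 / ∑ y, P (q.1, y)) * P q, fun q => mul_nonneg (hc _) (hP q),
    fun q => mul_le_of_le_one_left (hP q) (min_le_left _ _), fun x => ?_⟩
  dsimp only
  rw [← mul_sum]
  exact min_one_div_mul_self (hμ x) (sum_nonneg fun y _ => hP _)

lemma exists_le_colSums_eq_min [Fintype α] {P : α × β → ℝ} (hP : ∀ q, 0 ≤ P q) {μ : β → ℝ}
    (hμ : ∀ y, 0 ≤ μ y) :
    ∃ Q : α × β → ℝ, (∀ q, 0 ≤ Q q) ∧ (∀ q, Q q ≤ P q) ∧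
      ∀ y, ∑ x, Q (x, y) = min (∑ x, P (x, y)) (μ y) := by
  obtain ⟨Q, hQ0, hQP, hQ⟩ := exists_le_rowSums_eq_min (P := P ∘ Prod.swap) (fun q => hP _) hμ
  exact ⟨Q ∘ Prod.swap, fun q => hQ0 _, fun q => hQP _, hQ⟩

lemma exists_subcoupling [Fintype α] [Fintype β] {P : α × β → ℝ} (hP : ∀ q, 0 ≤ P q)
    {μX : α → ℝ} {μY : β → ℝ} (hμX : ∀ x, 0 ≤ μX x) (hμY : ∀ y, 0 ≤ μY y) :
    ∃ Q : α × β → ℝ, (∀ q, 0 ≤ Q q) ∧ (∀ q, Q q ≤ P q) ∧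
      (∀ x, ∑ y, Q (x, y) ≤ μX x) ∧ (∀ y, ∑ x, Q (x, y) ≤ μY y) ∧
      ∑ x, (μX x - ∑ y, Q (x, y)) ≤
        ∑ x, (μX x - ∑ y, P (x, y))⁺ + ∑ y, (∑ x, P (x, y) - μY y)⁺ := by
  obtain ⟨R, hR0, hRP, hRX⟩ := exists_le_rowSums_eq_min hP hμX
  obtain ⟨Q, hQ0, hQR, hQY⟩ := exists_le_colSums_eq_min hR0 hμY
  have hQX : ∀ x, ∑ y, Q (x, y) ≤ μX x := fun x =>
    (sum_le_sum fun y _ => hQR _).trans ((hRX x).trans_le (min_le_right _ _))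
  refine ⟨Q, hQ0, fun q => (hQR q).trans (hRP q), hQX,
    fun y => (hQY y).trans_le (min_le_right _ _), ?_⟩
  have hrows : ∑ x, (μX x - ∑ y, R (x, y)) = ∑ x, (μX x - ∑ y, P (x, y))⁺ := by
    refine sum_congr rfl fun x _ => ?_
    rw [hRX, min_comm, sub_min_eq_posPart_sub]
  have hcols : ∑ y, (∑ x, R (x, y) - ∑ x, Q (x, y)) ≤ ∑ y, (∑ x, P (x, y) - μY y)⁺ := by
    refine sum_le_sum fun y _ => ?_
    rw [hQY, sub_min_eq_posPart_sub]
    exact posPart_mono (sub_le_sub_right (sum_le_sum fun x _ => hRP _) _)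
  have hlost : ∑ x, (∑ y, R (x, y) - ∑ y, Q (x, y)) = ∑ y, (∑ x, R (x, y) - ∑ x, Q (x, y)) := by
    simp only [sum_sub_distrib]
    rw [sum_comm, sum_comm (f := fun x y => Q (x, y))]
  calc ∑ x, (μX x - ∑ y, Q (x, y))
      = ∑ x, (μX x - ∑ y, R (x, y)) + ∑ x, (∑ y, R (x, y) - ∑ y, Q (x, y)) := by
        rw [← sum_add_distrib]
        exact sum_congr rfl fun x _ => by ring
    _ ≤ _ := by rw [hrows, hlost]; exact add_le_add le_rfl hcols

lemma exists_nonneg_rowSums_colSums_eq [Fintype α] [Fintype β] {a : α → ℝ} {b : β → ℝ}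
    (ha : ∀ x, 0 ≤ a x) (hb : ∀ y, 0 ≤ b y) (hab : ∑ x, a x = ∑ y, b y) :
    ∃ R : α × β → ℝ, (∀ q, 0 ≤ R q) ∧ (∀ x, ∑ y, R (x, y) = a x) ∧
      ∀ y, ∑ x, R (x, y) = b y := by
  rcases (sum_nonneg fun x _ => ha x : 0 ≤ ∑ x, a x).eq_or_lt with hs | hs
  · have ha0 := (sum_eq_zero_iff_of_nonneg fun x _ => ha x).mp hs.symm
    have hb0 := (sum_eq_zero_iff_of_nonneg fun y _ => hb y).mp (hab ▸ hs.symm)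
    exact ⟨0, fun _ => le_rfl, fun x => by simp [ha0 x (mem_univ x)],
      fun y => by simp [hb0 y (mem_univ y)]⟩
  refine ⟨fun q => a q.1 * b q.2 / ∑ x, a x,
    fun q => div_nonneg (mul_nonneg (ha _) (hb _)) hs.le, fun x => ?_, fun y => ?_⟩
  · dsimp only
    rw [← sum_div, ← mul_sum, ← hab, mul_div_cancel_right₀ _ hs.ne']
  · dsimp only
    rw [← sum_div, ← sum_mul, mul_div_cancel_left₀ _ hs.ne']

lemma exists_coupling_le_add_deficit [Fintype α] [Fintype β] {Q : α × β → ℝ}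
    (hQ : ∀ q, 0 ≤ Q q) {μX : α → ℝ} {μY : β → ℝ} (hX : ∀ x, ∑ y, Q (x, y) ≤ μX x)
    (hY : ∀ y, ∑ x, Q (x, y) ≤ μY y)
    (hXY : ∑ x, μX x = ∑ y, μY y) :
    ∃ π : α × β → ℝ, (∀ q, 0 ≤ π q) ∧ (∀ x, ∑ y, π (x, y) = μX x) ∧
      (∀ y, ∑ x, π (x, y) = μY y) ∧
      ∀ B : Finset (α × β), ∑ q ∈ B, π q ≤ ∑ q ∈ B, Q q + ∑ x, (μX x - ∑ y, Q (x, y)) := by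
  have hdeficits : ∑ x, (μX x - ∑ y, Q (x, y)) = ∑ y, (μY y - ∑ x, Q (x, y)) := by
    rw [sum_sub_distrib, sum_sub_distrib, hXY, sum_comm]
  obtain ⟨R, hR0, hRX, hRY⟩ := exists_nonneg_rowSums_colSums_eq (fun x => sub_nonneg.mpr (hX x))
    (fun y => sub_nonneg.mpr (hY y)) hdeficits
  refine ⟨Q + R, fun q => add_nonneg (hQ q) (hR0 q), fun x => ?_, fun y => ?_, fun B => ?_⟩
  · simp only [Pi.add_apply, sum_add_distrib, hRX]; ring
  · simp only [Pi.add_apply, sum_add_distrib, hRY]; ring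
  · calc ∑ q ∈ B, (Q + R) q = ∑ q ∈ B, Q q + ∑ q ∈ B, R q := sum_add_distrib
      _ ≤ ∑ q ∈ B, Q q + ∑ q, R q := add_le_add le_rfl (sum_le_univ_sum_of_nonneg hR0)
      _ = _ := by rw [Fintype.sum_prod_type]; simp only [hRX]

end

theorem coupling_from_approximate_coupling_general {ΩX ΩY : Type*} [Fintype ΩX] [Fintype ΩY]
    (μX : ΩX → ℝ) (μY : ΩY → ℝ)
    (hμX0 : ∀ x, 0 ≤ μX x) (hμX1 : ∑ x, μX x = 1)
    (hμY0 : ∀ y, 0 ≤ μY y) (hμY1 : ∑ y, μY y = 1)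
    (P : ΩX × ΩY → ℝ) (hP0 : ∀ q, 0 ≤ P q)
    (B : Finset (ΩX × ΩY)) (α β γ : ℝ)
    (hα : ∑ q ∈ B, P q ≤ α)
    (hβ : ∀ A : Finset ΩX, |(∑ x ∈ A, μX x) - ∑ x ∈ A, (∑ y, P (x, y))| ≤ β)
    (hγ : ∀ A : Finset ΩY, |(∑ y ∈ A, μY y) - ∑ y ∈ A, (∑ x, P (x, y))| ≤ γ) :
    ∃ π : ΩX × ΩY → ℝ,
      (∀ q, 0 ≤ π q) ∧ (∑ q, π q = 1) ∧
      (∀ x, ∑ y, π (x, y) = μX x) ∧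
      (∀ y, ∑ x, π (x, y) = μY y) ∧
      ∑ q ∈ B, π q ≤ α + β + γ := by
  have hdefX : ∑ x, (μX x - ∑ y, P (x, y))⁺ ≤ β := sum_posPart_le_of_forall_sum_le fun A => by
    rw [sum_sub_distrib]
    exact (le_abs_self _).trans (hβ A)
  have hexY : ∑ y, (∑ x, P (x, y) - μY y)⁺ ≤ γ := sum_posPart_le_of_forall_sum_le fun A => by
    rw [sum_sub_distrib]
    exact (le_abs_self _).trans ((abs_sub_comm _ _).trans_le (hγ A))
  obtain ⟨Q, hQ0, hQP, hQX, hQY, hQmissing⟩ := exists_subcoupling hP0 hμX0 hμY0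
  obtain ⟨π, hπ0, hπX, hπY, hπB⟩ :=
    exists_coupling_le_add_deficit hQ0 hQX hQY (hμX1.trans hμY1.symm)
  refine ⟨π, hπ0, by rw [Fintype.sum_prod_type]; simp only [hπX, hμX1], hπX, hπY, ?_⟩
  calc ∑ q ∈ B, π q ≤ ∑ q ∈ B, Q q + ∑ x, (μX x - ∑ y, Q (x, y)) := hπB B
    _ ≤ ∑ q ∈ B, P q + (β + γ) :=
      add_le_add (sum_le_sum fun q _ => hQP q) (hQmissing.trans (add_le_add hdefX hexY))
    _ ≤ α + β + γ := by linarith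

/-- If a (not-necessarily well-coupled) distribution `P` on `ΩX × ΩY` has `P(B) ≤ α`
and its marginals are within total variation `β` and `γ` of `μX` and `μY` respectively,
then there is an exact coupling `π` of `μX` and `μY` with `π(B) ≤ α + β + γ`. -/
theorem coupling_from_approximate_coupling {ΩX ΩY : Type*} [Fintype ΩX] [Fintype ΩY]
    (μX : ΩX → ℝ) (μY : ΩY → ℝ)
    (hμX0 : ∀ x, 0 ≤ μX x) (hμX1 : ∑ x, μX x = 1)
    (hμY0 : ∀ y, 0 ≤ μY y) (hμY1 : ∑ y, μY y = 1)
    (P : ΩX × ΩY → ℝ) (hP0 : ∀ q, 0 ≤ P q) (hP1 : ∑ q, P q = 1)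
    (B : Finset (ΩX × ΩY)) (α β γ : ℝ)
    (hα : ∑ q ∈ B, P q ≤ α)
    (hβ : ∀ A : Finset ΩX, |(∑ x ∈ A, μX x) - ∑ x ∈ A, (∑ y, P (x, y))| ≤ β)
    (hγ : ∀ A : Finset ΩY, |(∑ y ∈ A, μY y) - ∑ y ∈ A, (∑ x, P (x, y))| ≤ γ) :
    ∃ π : ΩX × ΩY → ℝ,
      (∀ q, 0 ≤ π q) ∧ (∑ q, π q = 1) ∧
      (∀ x, ∑ y, π (x, y) = μX x) ∧
      (∀ y, ∑ x, π (x, y) = μY y) ∧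
      ∑ q ∈ B, π q ≤ α + β + γ :=
  coupling_from_approximate_coupling_general μX μY hμX0 hμX1 hμY0 hμY1 P hP0 B α β γ hα hβ hγ
end

section
/- Let d, n be positive integers and let δ⁺ denote the minimum out-degree of the directed binomial random graph on [n] with arc probability q, where each vertex's out-degree is Binomial(n−1, q). If q ∼ c·log n/n with c > 1 constant, then a.a.s. δ⁺ ≥ (1+o(1))·f₁(c)·c·log n, where f₁(c) = −((c−1)/c)/W(−(c−1)/(ce)) and W is the lower branch of the Lambert W function. Moreover f₁ is strictly increasing on [1,∞), f₁(1) = 0, and f₁(c) → 1 as c → ∞. -/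
/-!
Write `T = κ c log n`. A vertex has out-degree `Bin(n-1, q)`, so Markov's inequality for
`e^{-s·deg}` gives `P(deg < T) ≤ exp(sT + (n-1)q(e^{-s}-1))`, and the union bound over the
`n` vertices costs a factor `e^{log n}`. Since `(n-1)q ≈ c log n`, the exponent is about
`log n · (1 + sκc + c(e^{-s}-1))`. For `κ = e^{-s}` this vanishes exactly when
`(1+s)e^{-s} = 1 - 1/c`, that is, for `s = -(1+w)` with `w = W₋₁(-(c-1)/(ce))`, and then
`κ = f₁(c)`. A correction `h → 0` that absorbs the error in `q` plus `(log n)^{-1/2}` pushes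
the exponent below `-√(log n)`.

The properties of `f₁` follow from `f₁(c) = e^{-s}`: the map `s ↦ (1+s)e^{-s}` is strictly
decreasing on `[0, ∞)`, and `s ≤ sinh s` gives `(1 - f₁(c))² ≤ 2/c`.
-/

open Finset Filter Real Topology

/-- The probability that a random subset of `A`, containing each element independently with
probability `q`, has property `P`. -/
def subsetProb {ι : Type*} (A : Finset ι) (q : ℝ) (P : Finset ι → Prop) [DecidablePred P] :
    ℝ :=
  ∑ D ∈ A.powerset.filter P, q ^ #D * (1 - q) ^ (#A - #D)

section SubsetProb

variable {ι : Type*} (A : Finset ι) {q : ℝ}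

lemma subsetWeight_nonneg (hq0 : 0 ≤ q) (hq1 : q ≤ 1) (D : Finset ι) :
    0 ≤ q ^ #D * (1 - q) ^ (#A - #D) := by
  have : 0 ≤ 1 - q := sub_nonneg.2 hq1
  positivity

lemma subsetProb_add_subsetProb_not (q : ℝ) (P : Finset ι → Prop) [DecidablePred P] :
    subsetProb A q P + subsetProb A q (fun D => ¬ P D) = 1 := by
  rw [subsetProb, subsetProb, sum_filter_add_sum_filter_not, sum_pow_mul_eq_add_pow,
    add_sub_cancel, one_pow]

lemma subsetProb_exists_le {κ : Type*} [Fintype κ] (hq0 : 0 ≤ q) (hq1 : q ≤ 1)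
    (P : κ → Finset ι → Prop) [∀ v, DecidablePred (P v)]
    [DecidablePred fun D => ∃ v, P v D] :
    subsetProb A q (fun D => ∃ v, P v D) ≤ ∑ v, subsetProb A q (P v) := by
  have hw := subsetWeight_nonneg A hq0 hq1
  simp only [subsetProb, sum_filter]
  rw [sum_comm]
  refine sum_le_sum fun D _ => ?_
  split_ifs with h
  · obtain ⟨v, hv⟩ := h
    calc _ = if P v D then q ^ #D * (1 - q) ^ (#A - #D) else 0 := (if_pos hv).symm
      _ ≤ _ := single_le_sum
          (f := fun v => if P v D then q ^ #D * (1 - q) ^ (#A - #D) else 0)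
          (fun v _ => by split_ifs <;> simp [hw]) (mem_univ v)
  · exact sum_nonneg fun v _ => by split_ifs <;> simp [hw]

lemma sum_powerset_pow_card_filter_mul_weight [DecidableEq ι] (p : ι → Prop) [DecidablePred p]
    (q x : ℝ) :
    ∑ D ∈ A.powerset, x ^ #(D.filter p) * (q ^ #D * (1 - q) ^ (#A - #D)) =
      (q * x + (1 - q)) ^ #(A.filter p) := by
  have hterm : ∀ D ∈ A.powerset, x ^ #(D.filter p) * (q ^ #D * (1 - q) ^ (#A - #D)) =
      (∏ i ∈ D, q * if p i then x else 1) * ∏ _i ∈ A \ D, (1 - q) := by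
    intro D hD
    rw [prod_mul_distrib, prod_ite, prod_const, prod_const, prod_const, prod_const, one_pow,
      card_sdiff_of_subset (mem_powerset.1 hD)]
    ring
  rw [sum_congr rfl hterm, ← prod_add]
  calc ∏ i ∈ A, ((q * if p i then x else 1) + (1 - q))
      = ∏ i ∈ A, if p i then q * x + (1 - q) else 1 :=
        prod_congr rfl fun i _ => by split_ifs <;> ring
    _ = _ := by rw [prod_ite, prod_const, prod_const_one, mul_one]

lemma subsetProb_card_filter_lt_le [DecidableEq ι] (hq0 : 0 ≤ q) (hq1 : q ≤ 1)
    (p : ι → Prop) [DecidablePred p] {l : ℝ} (hl : 0 ≤ l) (T : ℝ) :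
    subsetProb A q (fun D => (#(D.filter p) : ℝ) < T) ≤
      exp (l * T + #(A.filter p) * (q * (exp (-l) - 1))) := by
  have hw := subsetWeight_nonneg A hq0 hq1
  have hmarkov : ∀ D ∈ A.powerset.filter (fun D => (#(D.filter p) : ℝ) < T),
      q ^ #D * (1 - q) ^ (#A - #D) ≤
        exp (l * T) * (exp (-l) ^ #(D.filter p) * (q ^ #D * (1 - q) ^ (#A - #D))) := by
    intro D hD
    have hlt := (mem_filter.1 hD).2
    have hone : 1 ≤ exp (l * T) * exp (-l) ^ #(D.filter p) := by
      rw [← exp_nat_mul, ← exp_add]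
      exact one_le_exp (by nlinarith)
    nlinarith [hw D]
  have hbase : q * exp (-l) + (1 - q) ≤ exp (q * (exp (-l) - 1)) := by
    linarith [add_one_le_exp (q * (exp (-l) - 1))]
  calc subsetProb A q (fun D => (#(D.filter p) : ℝ) < T)
      ≤ ∑ D ∈ A.powerset,
          exp (l * T) * (exp (-l) ^ #(D.filter p) * (q ^ #D * (1 - q) ^ (#A - #D))) :=
        (sum_le_sum hmarkov).trans <| sum_le_sum_of_subset_of_nonneg (filter_subset _ _)
          fun D _ _ => by have := hw D; positivity
    _ = exp (l * T) * (q * exp (-l) + (1 - q)) ^ #(A.filter p) := by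
        rw [← mul_sum, sum_powerset_pow_card_filter_mul_weight]
    _ ≤ exp (l * T) * exp (q * (exp (-l) - 1)) ^ #(A.filter p) := by
        gcongr
    _ = _ := by rw [← exp_nat_mul, ← exp_add]

end SubsetProb

def arcs (n : ℕ) : Finset (Fin n × Fin n) := univ.filter fun a => a.1 ≠ a.2

lemma card_arcs_filter_fst_eq (n : ℕ) (v : Fin n) :
    #((arcs n).filter fun a => a.1 = v) = n - 1 := by
  have h : (arcs n).filter (fun a => a.1 = v) = {v} ×ˢ univ.erase v := by
    ext ⟨a, b⟩
    simp only [arcs, mem_filter, mem_univ, true_and, mem_product, mem_singleton, mem_erase,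
      and_true]
    constructor
    · rintro ⟨hab, rfl⟩
      exact ⟨rfl, Ne.symm hab⟩
    · rintro ⟨rfl, hba⟩
      exact ⟨Ne.symm hba, rfl⟩
  rw [h, card_product, card_singleton, one_mul, card_erase_of_mem (mem_univ v), card_univ,
    Fintype.card_fin]

open Classical in
lemma subsetProb_exists_outdeg_lt_le (n : ℕ) {q : ℝ} (hq0 : 0 ≤ q) (hq1 : q ≤ 1) {l : ℝ}
    (hl : 0 ≤ l) (T : ℝ) :
    subsetProb (arcs n) q (fun D => ∃ v : Fin n, (#(D.filter fun a => a.1 = v) : ℝ) < T) ≤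
      n * exp (l * T + (n - 1 : ℕ) * (q * (exp (-l) - 1))) := by
  calc _ ≤ ∑ v : Fin n,
        subsetProb (arcs n) q (fun D => (#(D.filter fun a => a.1 = v) : ℝ) < T) :=
        subsetProb_exists_le _ hq0 hq1 _
    _ ≤ ∑ _v : Fin n, exp (l * T + (n - 1 : ℕ) * (q * (exp (-l) - 1))) :=
        sum_le_sum fun v _ => by
          simpa only [card_arcs_filter_fst_eq] using
            subsetProb_card_filter_lt_le (arcs n) hq0 hq1 (fun a : Fin n × Fin n => a.1 = v) hl T
    _ = _ := by simp

lemma tendsto_natPred_mul_div_log {c : ℝ} (hc : c ≠ 0) {q : ℕ → ℝ}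
    (hq : Tendsto (fun n : ℕ => q n / (c * log n / n)) atTop (𝓝 1)) :
    Tendsto (fun n : ℕ => ((n - 1 : ℕ) : ℝ) * q n / log n) atTop (𝓝 c) := by
  have hpred : Tendsto (fun n : ℕ => ((n - 1 : ℕ) : ℝ) / n) atTop (𝓝 1) := by
    have := (tendsto_const_nhds (x := (1 : ℝ))).sub tendsto_one_div_atTop_nhds_zero_nat
    rw [sub_zero] at this
    refine this.congr' ?_
    filter_upwards [eventually_ge_atTop 1] with n hn
    rw [Nat.cast_sub hn, Nat.cast_one, sub_div, div_self (by positivity)]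
  have := hq.mul (hpred.const_mul c)
  rw [one_mul, mul_one] at this
  refine this.congr' ?_
  filter_upwards [eventually_ge_atTop 2] with n hn
  have hlog : log n ≠ 0 := (log_pos (by exact_mod_cast hn)).ne'
  have hn0 : (n : ℝ) ≠ 0 := by positivity
  field_simp

/-- The exponent of the first-moment bound, for `L = log n`, `(n - 1) q = (c + ε) L` and the
correction `h = -(|ε| + L^{-1/2}) / (s e^{-s} c)`. -/
lemma first_moment_exponent_le {c s L ε : ℝ} (hc : 1 < c) (hs : 0 < s)
    (hsc : (1 + s) * exp (-s) = 1 - 1 / c) (hL : 0 < L) :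
    L + (s * ((1 + -((|ε| + 1 / √L) / (s * exp (-s) * c))) * exp (-s) * c * L) +
      (c + ε) * L * (exp (-s) - 1)) ≤ -√L := by
  have hκ0 := exp_pos (-s)
  have hκ1 : exp (-s) < 1 := exp_lt_one_iff.2 (by linarith)
  have hε : ε * (exp (-s) - 1) ≤ |ε| := by
    nlinarith [abs_nonneg ε, neg_abs_le ε, le_abs_self ε]
  have hsqrt : L / √L = √L := div_sqrt
  have hc0 : c ≠ 0 := by positivity
  have hzero : 1 + s * exp (-s) * c + c * (exp (-s) - 1) = 0 := by
    field_simp at hsc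
    linear_combination hsc
  have hsκc : s * exp (-s) * c ≠ 0 := by positivity
  calc _ = L * (1 + s * exp (-s) * c + c * (exp (-s) - 1)) +
        L * (ε * (exp (-s) - 1) - |ε|) - L / √L := by
        field_simp
        ring
    _ ≤ -√L := by rw [hzero, hsqrt]; nlinarith

open Classical in
lemma tendsto_subsetProb_forall_outdeg_ge {c s : ℝ} (hc : 1 < c) (hs : 0 < s)
    (hsc : (1 + s) * exp (-s) = 1 - 1 / c) {q : ℕ → ℝ} (hq01 : ∀ n, 0 ≤ q n ∧ q n ≤ 1)
    (hq : Tendsto (fun n : ℕ => q n / (c * log n / n)) atTop (𝓝 1)) :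
    ∃ h : ℕ → ℝ, Tendsto h atTop (𝓝 0) ∧
      Tendsto (fun n : ℕ => subsetProb (arcs n) (q n) fun D => ∀ v : Fin n,
        (1 + h n) * exp (-s) * c * log n ≤ (#(D.filter fun a => a.1 = v) : ℝ))
        atTop (𝓝 1) := by
  set ε : ℕ → ℝ := fun n => ((n - 1 : ℕ) : ℝ) * q n / log n - c
  have hε : Tendsto ε atTop (𝓝 0) := by
    simpa using (tendsto_natPred_mul_div_log (by positivity) hq).sub_const c
  have hsqrt : Tendsto (fun n : ℕ => √(log n)) atTop atTop :=
    tendsto_sqrt_atTop.comp (tendsto_log_atTop.comp tendsto_natCast_atTop_atTop)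
  have hδ : Tendsto (fun n : ℕ => 1 / √(log n)) atTop (𝓝 0) :=
    hsqrt.inv_tendsto_atTop.congr fun n => (one_div _).symm
  set h : ℕ → ℝ := fun n => -((|ε n| + 1 / √(log n)) / (s * exp (-s) * c))
  refine ⟨h, by simpa [h] using ((hε.abs.add hδ).div_const _).neg, ?_⟩
  have hbad : Tendsto (fun n : ℕ => subsetProb (arcs n) (q n) fun D => ∃ v : Fin n,
      (#(D.filter fun a => a.1 = v) : ℝ) < (1 + h n) * exp (-s) * c * log n) atTop (𝓝 0) := by
    refine squeeze_zero' (Eventually.of_forall fun n => sum_nonneg fun D _ =>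
      subsetWeight_nonneg _ (hq01 n).1 (hq01 n).2 D) ?_
      (tendsto_exp_atBot.comp (tendsto_neg_atTop_atBot.comp hsqrt))
    filter_upwards [eventually_ge_atTop 2] with n hn
    have hL : 0 < log n := log_pos (by exact_mod_cast hn)
    have hn0 : (0 : ℝ) < n := by positivity
    have hM : ((n - 1 : ℕ) : ℝ) * q n = (c + ε n) * log n := by
      simp only [ε]
      field_simp
      ring
    calc _ ≤ n * exp (s * ((1 + h n) * exp (-s) * c * log n) +
          (n - 1 : ℕ) * (q n * (exp (-s) - 1))) :=
          subsetProb_exists_outdeg_lt_le n (hq01 n).1 (hq01 n).2 hs.le _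
      _ = exp (log n + (s * ((1 + h n) * exp (-s) * c * log n) +
          (c + ε n) * log n * (exp (-s) - 1))) := by
          rw [exp_add (log _), exp_log hn0, ← hM]
          ring_nf
      _ ≤ exp (-√(log n)) := exp_le_exp.2 (first_moment_exponent_le hc hs hsc hL)
  have hcompl := fun n => subsetProb_add_subsetProb_not (arcs n) (q n) fun D => ∀ v : Fin n,
      (1 + h n) * exp (-s) * c * log n ≤ (#(D.filter fun a => a.1 = v) : ℝ)
  simp only [not_forall, not_le] at hcompl
  have hgood := (tendsto_const_nhds (x := (1 : ℝ))).sub hbad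
  rw [sub_zero] at hgood
  exact hgood.congr fun n => by linarith [hcompl n]

lemma strictAntiOn_one_add_mul_exp_neg :
    StrictAntiOn (fun s : ℝ => (1 + s) * exp (-s)) (Set.Ici 0) := by
  intro s (hs : 0 ≤ s) t _ hst
  have hgap := add_one_lt_exp (sub_ne_zero.2 hst.ne')
  have hsplit : exp (-s) = exp (t - s) * exp (-t) := by rw [← exp_add]; ring_nf
  have hkey : 1 + t < (1 + s) * exp (t - s) := by
    nlinarith [mul_lt_mul_of_pos_left hgap (by linarith : 0 < 1 + s)]
  have := mul_lt_mul_of_pos_right hkey (exp_pos (-t))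
  simp only [hsplit]
  linarith

lemma one_sub_exp_neg_sq_le {s : ℝ} (hs : 0 ≤ s) :
    (1 - exp (-s)) ^ 2 ≤ 2 * (1 - (1 + s) * exp (-s)) := by
  have hsinh := self_le_sinh_iff.2 hs
  rw [sinh_eq] at hsinh
  have hinv : exp s * exp (-s) = 1 := by rw [← exp_add, add_neg_cancel, exp_zero]
  nlinarith [mul_le_mul_of_nonneg_right hsinh (exp_pos (-s)).le]

/-- Take `s = -(1 + w)` for `w = W(-(c-1)/(ce))`; then `f₁ c = w e^{w+1} / w`. -/
lemma exists_pos_one_add_mul_exp_neg_eq {W f₁ : ℝ → ℝ}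
    (hW : ∀ x ∈ Set.Ico (-(exp 1)⁻¹) (0 : ℝ), W x * exp (W x) = x ∧ W x ≤ -1)
    (hf₁ : ∀ c : ℝ, f₁ c = -((c - 1) / c) / W (-((c - 1) / (c * exp 1))))
    {c : ℝ} (hc : 1 < c) :
    ∃ s > 0, (1 + s) * exp (-s) = 1 - 1 / c ∧ f₁ c = exp (-s) := by
  have hc0 : 0 < c := by linarith
  have he := exp_pos 1
  have harg : -((c - 1) / (c * exp 1)) ∈ Set.Ico (-(exp 1)⁻¹) 0 := by
    constructor
    · rw [neg_le_neg_iff, div_le_iff₀ (by positivity), inv_mul_eq_div,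
        mul_div_cancel_right₀ _ he.ne']
      linarith
    · exact neg_neg_of_pos (by apply div_pos <;> [linarith; positivity])
  obtain ⟨hWx, hW1⟩ := hW _ harg
  set w := W (-((c - 1) / (c * exp 1)))
  have hwe : -w * exp (w + 1) = 1 - 1 / c := by
    rw [exp_add, ← mul_assoc, neg_mul, hWx]
    field_simp
  have hw : w < -1 := by
    refine lt_of_le_of_ne hW1 fun hw => ?_
    rw [hw] at hwe
    norm_num at hwe
    exact (inv_pos.2 hc0).ne' (by linarith)
  refine ⟨-(1 + w), by linarith, ?_, ?_⟩
  · rw [neg_neg, ← hwe]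
    ring_nf
  · have hf : f₁ c = -((c - 1) / c) / w := hf₁ c
    rw [hf, ← one_sub_div hc0.ne', ← hwe, neg_mul, neg_neg, neg_neg,
      mul_div_cancel_left₀ _ (by linarith : w ≠ 0), add_comm]

lemma strictMonoOn_of_one_add_mul_exp_neg_eq {F : ℝ → ℝ} (h1 : F 1 = 0)
    (hF : ∀ c > 1, ∃ s > 0, (1 + s) * exp (-s) = 1 - 1 / c ∧ F c = exp (-s)) :
    StrictMonoOn F (Set.Ici 1) := by
  intro c₁ hc₁ c₂ hc₂ hlt
  obtain ⟨s₂, hs₂, hsc₂, hF₂⟩ := hF c₂ (lt_of_le_of_lt hc₁ hlt)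
  rcases (Set.mem_Ici.1 hc₁).eq_or_lt with rfl | hc₁
  · rw [h1, hF₂]
    exact exp_pos _
  obtain ⟨s₁, hs₁, hsc₁, hF₁⟩ := hF c₁ hc₁
  have hs : s₂ < s₁ := by
    refine (strictAntiOn_one_add_mul_exp_neg.lt_iff_gt hs₁.le hs₂.le).1 ?_
    rw [hsc₁, hsc₂]
    gcongr
  rw [hF₁, hF₂]
  exact exp_lt_exp.2 (neg_lt_neg hs)

lemma tendsto_of_one_add_mul_exp_neg_eq {F : ℝ → ℝ}
    (hF : ∀ c > 1, ∃ s > 0, (1 + s) * exp (-s) = 1 - 1 / c ∧ F c = exp (-s)) :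
    Tendsto F atTop (𝓝 1) := by
  have hbound : ∀ᶠ c in atTop, |F c - 1| ≤ √(2 / c) := by
    filter_upwards [eventually_gt_atTop 1] with c hc
    obtain ⟨s, hs, hsc, hFc⟩ := hF c hc
    refine abs_le_sqrt ?_
    have := one_sub_exp_neg_sq_le hs.le
    rw [hsc] at this
    rw [hFc]
    linarith [show (exp (-s) - 1) ^ 2 = (1 - exp (-s)) ^ 2 by ring,
      show 2 * (1 - (1 - 1 / c)) = 2 / c by ring]
  have hsqrt : Tendsto (fun c : ℝ => √(2 / c)) atTop (𝓝 0) := by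
    simpa only [sqrt_zero, id] using (tendsto_const_nhds.div_atTop tendsto_id).sqrt
  exact tendsto_iff_norm_sub_tendsto_zero.2
    (squeeze_zero' (Eventually.of_forall fun _ => norm_nonneg _) hbound hsqrt)

open Classical in
/-- In the directed binomial random graph on `[n]` with arc probability
`q ∼ c·log n/n`, `c > 1`, a.a.s. the minimum out-degree is at least
`(1+o(1))·f₁(c)·c·log n`, where `f₁(c) = -((c-1)/c)/W(-(c-1)/(ce))` and `W` is the
lower branch of the Lambert `W` function; moreover `f₁` is strictly increasing on
`[1,∞)`, `f₁(1) = 0` and `f₁(c) → 1` as `c → ∞`. -/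
theorem min_outdegree_directed_gnp
    (W : ℝ → ℝ)
    (hW : ∀ x ∈ Set.Ico (-(Real.exp 1)⁻¹) (0 : ℝ),
      W x * Real.exp (W x) = x ∧ W x ≤ -1)
    (f₁ : ℝ → ℝ)
    (hf₁ : ∀ c : ℝ, f₁ c = -((c - 1) / c) / W (-((c - 1) / (c * Real.exp 1))))
    (c : ℝ) (hc : 1 < c)
    (q : ℕ → ℝ) (hq01 : ∀ n, 0 ≤ q n ∧ q n ≤ 1)
    (hq : Tendsto (fun n : ℕ => q n / (c * Real.log n / n)) atTop (nhds 1)) :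
    (∃ h : ℕ → ℝ, Tendsto h atTop (nhds 0) ∧
      Tendsto (fun n : ℕ =>
        ∑ D ∈ ((Finset.univ.filter fun a : Fin n × Fin n => a.1 ≠ a.2).powerset.filter
            fun D => ∀ v : Fin n,
              (1 + h n) * f₁ c * c * Real.log n ≤
                ((D.filter fun a : Fin n × Fin n => a.1 = v).card : ℝ)),
          q n ^ D.card *
            (1 - q n) ^ ((Finset.univ.filter fun a : Fin n × Fin n => a.1 ≠ a.2).card
              - D.card)) atTop (nhds 1)) ∧
    StrictMonoOn f₁ (Set.Ici 1) ∧ f₁ 1 = 0 ∧ Tendsto f₁ atTop (nhds 1) := by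
  have hF := fun c (hc : 1 < c) => exists_pos_one_add_mul_exp_neg_eq hW hf₁ hc
  have hf₁_one : f₁ 1 = 0 := by rw [hf₁]; norm_num
  refine ⟨?_, strictMonoOn_of_one_add_mul_exp_neg_eq hf₁_one hF, hf₁_one,
    tendsto_of_one_add_mul_exp_neg_eq hF⟩
  obtain ⟨s, hs, hsc, hf₁c⟩ := hF c hc
  rw [hf₁c]
  exact tendsto_subsetProb_forall_outdeg_ge hc hs hsc hq01 hq
end
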